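/- Let G be a finite undirected graph whose vertices are the irreducible components of the spectrum of a Noetherian local ring A satisfying S₂, with an edge between two components whenever their intersection has codimension 1 in Spec A. If dim A ≥ 1, then G is connected. -/

import Mathlib

/-- A local ring has depth at least one. -/
def DepthGeOne (R : Type*) [CommRing R] [IsLocalRing R] : Prop :=
  ∃ x ∈ IsLocalRing.maximalIdeal R, x ∈ nonZeroDivisors R

/-- A local ring has depth at least two (a regular sequence of length two in the maximal
ideal). -/
def DepthGeTwo (R : Type*) [CommRing R] [IsLocalRing R] : Prop :=
  ∃ x ∈ IsLocalRing.maximalIdeal R, x ∈ nonZeroDivisors R ∧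
    ∃ y ∈ IsLocalRing.maximalIdeal R,
      Ideal.Quotient.mk (Ideal.span {x}) y ∈ nonZeroDivisors (R ⧸ Ideal.span ({x} : Set R))

/-- Serre's condition `S₂` at a prime `q`. -/
def SerreS2At (A : Type*) [CommRing A] (q : PrimeSpectrum A) : Prop :=
  ((1 : ℕ∞) ≤ Order.height q → DepthGeOne (Localization.AtPrime q.asIdeal)) ∧
  ((2 : ℕ∞) ≤ Order.height q → DepthGeTwo (Localization.AtPrime q.asIdeal))

/-- Serre's condition `S₂`. -/
def SerreS2 (A : Type*) [CommRing A] : Prop := ∀ q, SerreS2At A q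

/-- The Hochster–Huneke (dual) graph of a ring: vertices are the minimal primes
(irreducible components of `Spec A`), with an edge between two distinct components
whenever there is a prime of height at most one containing both (i.e. their intersection
has codimension at most one in `Spec A`). -/
def hochsterHunekeGraph (A : Type*) [CommRing A] :
    SimpleGraph {p : Ideal A // p ∈ minimalPrimes A} where
  Adj p q := p ≠ q ∧ ∃ r : PrimeSpectrum A,
    p.1 ≤ r.asIdeal ∧ q.1 ≤ r.asIdeal ∧ Order.height r ≤ 1
  symm := by
    constructor
    rintro p q ⟨hne, r, h₁, h₂, h₃⟩
    exact ⟨hne.symm, r, h₂, h₁, h₃⟩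
  loopless := by constructor; rintro p ⟨hne, -⟩; exact hne rfl

/-!
Suppose the graph is disconnected: let `S` be a connected component, and `I`, `J` the
intersections of the minimal primes in `S` and outside it. Then `I ∩ J` is nilpotent and, `A`
being local, `I + J` is proper. A prime `q` minimal over `I + J` contains non-adjacent minimal
primes from both sides, so `ht q ≥ 2` and `A_q` has depth two by `S₂`.

In a local ring with a regular sequence `x, y`, ideals with `K L = 0` and `√(K + L) = 𝔪`
cannot both be nonzero: write `xⁿ = a + b`, `yᵐ = c + d` with `a, c ∈ K` and `b, d ∈ L`;
then `yᵐ a = c xⁿ`, and since `yᵐ` is regular modulo `xⁿ`, `a = e xⁿ` with `e` idempotent,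
so `e` is `0` or `1` and the nonzerodivisor `xⁿ` kills `K` or `L`. Applied in `A_q` to the images of
powers of `I` and `J`, this says that all primes inside `q` contain `I`, or all contain `J`,
contradicting the choice of the two minimal primes below `q`.
-/

open Ideal IsLocalRing
open scoped nonZeroDivisors

section Regularity

variable {R : Type*} [CommRing R]

theorem mem_of_pow_mul_mem {y : R} {I : Ideal R} (hy : ∀ r, y * r ∈ I → r ∈ I) (m : ℕ)
    {r : R} (hr : y ^ m * r ∈ I) : r ∈ I := by
  induction m generalizing r with
  | zero => simpa using hr
  | succ m ih => exact hy r (ih (by rwa [← mul_assoc, ← pow_succ]))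

theorem mem_span_pow_of_mul_mem {x z : R} (hx : x ∈ R⁰)
    (hz : ∀ r, z * r ∈ span {x} → r ∈ span {x}) (n : ℕ) {r : R}
    (hr : z * r ∈ span {x ^ n}) : r ∈ span {x ^ n} := by
  induction n generalizing r with
  | zero => simp
  | succ n ih =>
    obtain ⟨s, hs⟩ := mem_span_singleton'.mp hr
    obtain ⟨r', rfl⟩ := mem_span_singleton'.mp <|
      hz r (mem_span_singleton'.mpr ⟨s * x ^ n, by rw [← hs]; ring⟩)
    have hzr' : z * r' = s * x ^ n :=
      (mul_cancel_right_mem_nonZeroDivisors hx).mp (by linear_combination -hs)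
    obtain ⟨t, rfl⟩ := mem_span_singleton'.mp (ih (mem_span_singleton'.mpr ⟨s, hzr'.symm⟩))
    exact mem_span_singleton'.mpr ⟨t, by ring⟩

end Regularity

theorem IsLocalRing.eq_zero_or_eq_zero_of_eq_add {R : Type*} [CommRing R] [IsLocalRing R]
    {u a b : R} (hu : u ∈ R⁰) (hab : u = a + b) (h0 : a * b = 0) (hdvd : u ∣ a) :
    a = 0 ∨ b = 0 := by
  obtain ⟨c, rfl⟩ := hdvd
  have hb : b = u * (1 - c) := by linear_combination -hab
  have hc : c * (1 - c) = 0 :=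
    (mul_right_mem_nonZeroDivisors_eq_zero_iff (mul_mem hu hu)).mp
      (by linear_combination h0 - u * c * hb)
  rcases isUnit_or_isUnit_one_sub_self c with hunit | hunit
  · exact Or.inr (by rw [hb, hunit.mul_right_eq_zero.mp hc, mul_zero])
  · exact Or.inl (by rw [hunit.mul_left_eq_zero.mp hc, mul_zero])

theorem DepthGeTwo.eq_bot_or_eq_bot {R : Type*} [CommRing R] [IsLocalRing R] (h : DepthGeTwo R)
    {K L : Ideal R} (hKL : K * L = ⊥) (hrad : maximalIdeal R ≤ (K ⊔ L).radical) :
    K = ⊥ ∨ L = ⊥ := by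
  obtain ⟨x, hxm, hx, y, hym, hy⟩ := h
  have hy' : ∀ r, y * r ∈ span {x} → r ∈ span {x} := fun r hr ↦ by
    rw [← Quotient.eq_zero_iff_mem] at hr ⊢
    exact (mem_nonZeroDivisors_iff.mp hy).2 _ (by rwa [mul_comm, ← map_mul])
  obtain ⟨n, hn⟩ := hrad hxm
  obtain ⟨m, hm⟩ := hrad hym
  obtain ⟨a, ha, b, hb, hab⟩ := Submodule.mem_sup.mp hn
  obtain ⟨c, hc, d, hd, hcd⟩ := Submodule.mem_sup.mp hm
  have hzero {s t : R} (hs : s ∈ K) (ht : t ∈ L) : s * t = 0 := by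
    simpa [hKL] using mul_mem_mul hs ht
  have hdvd : x ^ n ∣ a := by
    refine mem_span_singleton.mp
      (mem_span_pow_of_mul_mem hx (fun _ ↦ mem_of_pow_mul_mem hy' m) n ?_)
    exact mem_span_singleton'.mpr
      ⟨c, by linear_combination -c * hab + a * hcd + hzero hc hb - hzero ha hd⟩
  have hxn : x ^ n ∈ R⁰ := pow_mem hx n
  rcases eq_zero_or_eq_zero_of_eq_add hxn hab.symm (hzero ha hb) hdvd with rfl | rfl
  · refine Or.inl (eq_bot_iff.mpr fun k hk ↦ mem_bot.mpr ?_)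
    exact (mul_right_mem_nonZeroDivisors_eq_zero_iff hxn).mp (by simpa [← hab] using hzero hk hb)
  · refine Or.inr (eq_bot_iff.mpr fun l hl ↦ mem_bot.mpr ?_)
    exact (mul_right_mem_nonZeroDivisors_eq_zero_iff hxn).mp
      (by simpa [← hab, mul_comm] using hzero ha hl)

section PuncturedSpectrum

variable {A : Type*} [CommRing A]

theorem le_of_map_localization_eq_bot {q N P : Ideal A} [q.IsPrime] [hP : P.IsPrime]
    (hN : N.map (algebraMap A (Localization.AtPrime q)) = ⊥) (hPq : P ≤ q) : N ≤ P := by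
  have hdisj : Disjoint (q.primeCompl : Set A) P :=
    Set.disjoint_left.mpr fun _ hs hsP ↦ hs (hPq hsP)
  calc N ≤ (N.map (algebraMap A (Localization.AtPrime q))).comap _ := le_comap_map
    _ ≤ (P.map (algebraMap A (Localization.AtPrime q))).comap _ := comap_mono (hN ▸ bot_le)
    _ = P := IsLocalization.under_map_of_isPrime_disjoint _ _ hP hdisj

theorem DepthGeTwo.forall_le_or_forall_le_of_mul_eq_bot {I J : Ideal A} (q : PrimeSpectrum A)
    (hdepth : DepthGeTwo (Localization.AtPrime q.asIdeal)) (hIJ : I * J = ⊥)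
    (hq : q.asIdeal ∈ (I ⊔ J).minimalPrimes) :
    (∀ P : Ideal A, P.IsPrime → P ≤ q.asIdeal → I ≤ P) ∨
      (∀ P : Ideal A, P.IsPrime → P ≤ q.asIdeal → J ≤ P) := by
  set f := algebraMap A (Localization.AtPrime q.asIdeal)
  have hrad : maximalIdeal _ ≤ (I.map f ⊔ J.map f).radical := by
    rw [← Ideal.map_sup, IsLocalization.AtPrime.radical_map_of_mem_minimalPrimes _ _ _ hq,
      Localization.AtPrime.map_eq_maximalIdeal]
  have hprod : I.map f * J.map f = ⊥ := by rw [← Ideal.map_mul, hIJ, Ideal.map_bot]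
  refine (hdepth.eq_bot_or_eq_bot hprod hrad).imp ?_ ?_ <;>
    exact fun h P _ hPq ↦ le_of_map_localization_eq_bot h hPq

theorem DepthGeTwo.forall_le_or_forall_le [IsNoetherianRing A] {I J : Ideal A}
    (q : PrimeSpectrum A) (hdepth : DepthGeTwo (Localization.AtPrime q.asIdeal))
    (hIJ : I ⊓ J ≤ nilradical A) (hq : q.asIdeal ∈ (I ⊔ J).minimalPrimes) :
    (∀ P : Ideal A, P.IsPrime → P ≤ q.asIdeal → I ≤ P) ∨
      (∀ P : Ideal A, P.IsPrime → P ≤ q.asIdeal → J ≤ P) := by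
  obtain ⟨k, hk⟩ := IsNoetherianRing.isNilpotent_nilradical A
  have hk' : nilradical A ^ (k + 1) = ⊥ := by rw [pow_succ, hk, zero_mul, zero_eq_bot]
  have hpow : I ^ (k + 1) * J ^ (k + 1) = ⊥ :=
    eq_bot_iff.mpr (hk' ▸ mul_pow I J _ ▸ pow_right_mono (mul_le_inf.trans hIJ) _)
  have hrad : (I ^ (k + 1) ⊔ J ^ (k + 1)).radical = (I ⊔ J).radical := by
    rw [radical_sup, Ideal.radical_pow I k.succ_ne_zero, Ideal.radical_pow J k.succ_ne_zero,
      ← radical_sup]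
  have hq' : q.asIdeal ∈ (I ^ (k + 1) ⊔ J ^ (k + 1)).minimalPrimes := by
    rwa [← radical_minimalPrimes, hrad, radical_minimalPrimes]
  refine (forall_le_or_forall_le_of_mul_eq_bot q hdepth hpow hq').imp ?_ ?_ <;>
    exact fun h P hP hPq ↦ hP.le_of_pow_le (h P hP hPq)

end PuncturedSpectrum

section MinimalPrimes

variable {A : Type*} [CommRing A]

theorem inf_le_minimalPrime_iff {S : Finset {p : Ideal A // p ∈ minimalPrimes A}}
    {z : {p : Ideal A // p ∈ minimalPrimes A}} : S.inf Subtype.val ≤ z.1 ↔ z ∈ S := by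
  refine ⟨fun h ↦ ?_, fun h ↦ Finset.inf_le h⟩
  obtain ⟨p, hpS, hpz⟩ := (z.2.1.1.inf_le').mp h
  rwa [Subtype.ext (le_antisymm (z.2.2 p.2.1 hpz) hpz)]

theorem inf_inf_inf_compl_le_nilradical [Fintype {p : Ideal A // p ∈ minimalPrimes A}]
    [DecidableEq {p : Ideal A // p ∈ minimalPrimes A}]
    (S : Finset {p : Ideal A // p ∈ minimalPrimes A}) :
    S.inf Subtype.val ⊓ Sᶜ.inf Subtype.val ≤ nilradical A := by
  rw [← Finset.inf_union, Finset.union_compl, nilradical, ← sInf_minimalPrimes]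
  exact le_sInf fun p hp ↦
    Finset.inf_le (Finset.mem_univ (⟨p, hp⟩ : {p // p ∈ minimalPrimes A}))

theorem two_le_height_of_not_adj {z z' : {p : Ideal A // p ∈ minimalPrimes A}} (hne : z ≠ z')
    (hadj : ¬ (hochsterHunekeGraph A).Adj z z') (q : PrimeSpectrum A) (hz : z.1 ≤ q.asIdeal)
    (hz' : z'.1 ≤ q.asIdeal) : 2 ≤ Order.height q := by
  by_contra h
  exact hadj ⟨hne, q, hz, hz', (ENat.lt_add_one_iff ENat.one_ne_top).mp (not_le.mp h)⟩

end MinimalPrimes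

theorem hochsterHunekeGraph_connected_general
    (A : Type) [CommRing A] [IsNoetherianRing A] [IsLocalRing A]
    (hS2 : SerreS2 A) :
    (hochsterHunekeGraph A).Connected := by
  classical
  have : Fintype {p : Ideal A // p ∈ minimalPrimes A} :=
    (minimalPrimes.finite_of_isNoetherianRing A).fintype
  obtain ⟨p₀, hp₀, -⟩ := exists_minimalPrimes_le (bot_le : ⊥ ≤ maximalIdeal A)
  refine (SimpleGraph.connected_iff _).mpr ⟨fun v w ↦ ?_, ⟨⟨p₀, hp₀⟩⟩⟩
  by_contra hvw
  set S := Finset.univ.filter ((hochsterHunekeGraph A).Reachable v)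
  have hS {z} : z ∈ S ↔ (hochsterHunekeGraph A).Reachable v z := by simp [S]
  have hv : v ∈ S := hS.mpr .rfl
  have hw : w ∈ Sᶜ := Finset.mem_compl.mpr (hvw ∘ hS.mp)
  have hmax : S.inf Subtype.val ⊔ Sᶜ.inf Subtype.val ≤ maximalIdeal A :=
    sup_le ((Finset.inf_le hv).trans (le_maximalIdeal v.2.1.1.ne_top))
      ((Finset.inf_le hw).trans (le_maximalIdeal w.2.1.1.ne_top))
  obtain ⟨q, hq, -⟩ := exists_minimalPrimes_le hmax
  have hqP : q.IsPrime := hq.1.1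
  obtain ⟨z, hz, hzq⟩ := hqP.inf_le'.mp (le_sup_left.trans hq.1.2)
  obtain ⟨z', hz', hz'q⟩ := hqP.inf_le'.mp (le_sup_right.trans hq.1.2)
  rw [Finset.mem_compl] at hz'
  have hnadj : ¬ (hochsterHunekeGraph A).Adj z z' := fun h ↦
    hz' (hS.mpr ((hS.mp hz).trans h.reachable))
  have hheight := two_le_height_of_not_adj (ne_of_mem_of_not_mem hz hz') hnadj ⟨q, hqP⟩ hzq hz'q
  rcases ((hS2 ⟨q, hqP⟩).2 hheight).forall_le_or_forall_le ⟨q, hqP⟩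
    (inf_inf_inf_compl_le_nilradical S) hq with h | h
  · exact hz' (inf_le_minimalPrime_iff.mp (h z'.1 z'.2.1.1 hz'q))
  · exact Finset.mem_compl.mp (inf_le_minimalPrime_iff.mp (h z.1 z.2.1.1 hzq)) hz

/-- Hochster–Huneke: Let `A` be a Noetherian local ring satisfying Serre's
condition `S₂` with `dim A ≥ 1`.  Then the Hochster–Huneke graph, whose vertices are the
irreducible components of `Spec A` with edges given by codimension-one intersections, is
connected. -/
theorem hochsterHunekeGraph_connected
    (A : Type) [CommRing A] [IsNoetherianRing A] [IsLocalRing A]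
    (hS2 : SerreS2 A) (hdim : 1 ≤ ringKrullDim A) :
    (hochsterHunekeGraph A).Connected :=
  hochsterHunekeGraph_connected_general A hS2
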